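/- Let F and G be simplicial complexes, with G_0 and F_0 their vertex sets. Then there exists a partition F_0 = ⋃_{v ∈ G_0} V_v of the vertex set of F into (possibly empty) subsets indexed by the vertices of G such that the number of ordered copies φ of G in F satisfying φ(v) ∈ V_v for every vertex v of G is at least s_0(G)^{-s_0(G)} · n_o(F,G). -/

import Mathlib

open scoped BigOperators

/-- A finite abstract simplicial complex: a nonempty family of nonempty finite subsets of `ℕ`
(the simplices), closed under taking nonempty subsets. -/
structure SComplex where
  faces : Finset (Finset ℕ)
  faces_nonempty : faces.Nonempty
  empty_not_mem : ∅ ∉ faces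
  down_closed : ∀ s ∈ faces, ∀ t : Finset ℕ, t ⊆ s → t ≠ ∅ → t ∈ faces

namespace SComplex

/-- The vertex set of a simplicial complex. -/
def verts (F : SComplex) : Finset ℕ := F.faces.sup id

/-- The finset of `i`-simplices (simplices with `i+1` vertices). -/
def simplices (F : SComplex) (i : ℕ) : Finset (Finset ℕ) :=
  F.faces.filter fun s => s.card = i + 1

/-- `s i F` is the number of `i`-simplices of `F`. -/
def s (F : SComplex) (i : ℕ) : ℕ := (F.simplices i).card

/-- The dimension of a simplicial complex: the largest `i` with an `i`-simplex. -/
def dim (F : SComplex) : ℕ := F.faces.sup Finset.card - 1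

/-- `H` is a subcomplex of `F`. -/
def IsSubcomplex (H F : SComplex) : Prop := H.faces ⊆ F.faces

/-- An ordered copy of `G` in `F`: an injective map on the vertices of `G` (normalized to `0`
off the vertex set of `G`) mapping the vertex set of every simplex of `G` onto the vertex set
of a simplex of `F` (necessarily of the same dimension). -/
def IsOrderedCopy (F G : SComplex) (φ : ℕ → ℕ) : Prop :=
  Set.InjOn φ ↑G.verts ∧ (∀ v ∉ G.verts, φ v = 0) ∧
    ∀ t ∈ G.faces, t.image φ ∈ F.faces

/-- `nOrdered F G` is the number of ordered copies of `G` in `F`. -/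
noncomputable def nOrdered (F G : SComplex) : ℕ :=
  Set.ncard {φ : ℕ → ℕ | IsOrderedCopy F G φ}

/-- `F` is isomorphic to `G`. -/
def Iso (F G : SComplex) : Prop :=
  ∃ φ : ℕ → ℕ, Set.InjOn φ ↑G.verts ∧ F.faces = G.faces.image (Finset.image φ)

/-- `nCopies F G` is the number of unordered copies of `G` in `F`, i.e. the number of
subcomplexes of `F` isomorphic to `G`. -/
noncomputable def nCopies (F G : SComplex) : ℕ :=
  Set.ncard {H : SComplex | H.IsSubcomplex F ∧ H.Iso G}

/-- `Nmax m k G` is the maximum of `nCopies F G` over all simplicial complexes `F` with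
`s i F ≤ m i` for every `i ≤ k` (the extremal parameter `N(m₀,…,m_k;G)`). -/
noncomputable def Nmax (m : ℕ → ℕ) (k : ℕ) (G : SComplex) : ℕ :=
  sSup {t : ℕ | ∃ F : SComplex, (∀ i ≤ k, F.s i ≤ m i) ∧ t = nCopies F G}

/-- `gammaLP m k G` is the optimal value of the linear program: maximize `∑_{v ∈ G₀} x v`
subject to `0 ≤ ∑_{v ∈ σ} x v ≤ log (m i)` for every `i`-simplex `σ` of `G`, `i ≤ k`. -/
noncomputable def gammaLP (m : ℕ → ℕ) (k : ℕ) (G : SComplex) : ℝ :=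
  sSup {t : ℝ | ∃ x : ℕ → ℝ,
    (∀ i ≤ k, ∀ σ ∈ G.simplices i,
        0 ≤ ∑ v ∈ σ, x v ∧ ∑ v ∈ σ, x v ≤ Real.log (m i)) ∧
    t = ∑ v ∈ G.verts, x v}

/-- The potential `i`-simplices on vertex set `{1,…,n}` given the complex `K`: the `(i+1)`-sets
all of whose `i`-element subsets (the `(i-1)`-dimensional boundary faces) belong to `K`. -/
def potentialSimplices (n i : ℕ) (K : SComplex) : Finset (Finset ℕ) :=
  ((Finset.Icc 1 n).powersetCard (i + 1)).filter
    fun σ => ∀ t ∈ σ.powersetCard i, t ∈ K.faces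

/-- The probability that the multi-parameter random simplicial complex `K(n; p₁,…,p_k)` on
vertex set `{1,…,n}` equals the complex `K`. -/
noncomputable def complexProb (n k : ℕ) (p : ℕ → ℝ) (K : SComplex) : ℝ :=
  if K.verts = Finset.Icc 1 n ∧ ∀ t ∈ K.faces, t.card ≤ k + 1 then
    ∏ i ∈ Finset.Icc 1 k,
      p i ^ K.s i * (1 - p i) ^ ((potentialSimplices n i K).card - K.s i)
  else 0

/-- The probability of an event `A` under the multi-parameter random simplicial complex. -/
noncomputable def pr (n k : ℕ) (p : ℕ → ℝ) (A : Set SComplex) : ℝ :=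
  ∑' K : SComplex, A.indicator (complexProb n k p) K

/-- The expectation of `f` under the multi-parameter random simplicial complex. -/
noncomputable def expec (n k : ℕ) (p : ℕ → ℝ) (f : SComplex → ℝ) : ℝ :=
  ∑' K : SComplex, complexProb n k p K * f K

/-- `μ_{o,n}(G) = (n)_{s₀(G)} ∏_{i=1}^k p_i^{s_i(G)}`. -/
noncomputable def muo (n k : ℕ) (p : ℕ → ℝ) (G : SComplex) : ℝ :=
  (n.descFactorial (G.s 0) : ℝ) * ∏ i ∈ Finset.Icc 1 k, p i ^ G.s i

/-- `Ψ_{G,n} = n^{s₀(G)} ∏_{i=1}^k p_i^{s_i(G)}`. -/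
noncomputable def Psi (n k : ℕ) (p : ℕ → ℝ) (G : SComplex) : ℝ :=
  (n : ℝ) ^ G.s 0 * ∏ i ∈ Finset.Icc 1 k, p i ^ G.s i

/-- `M*_{G,n}(p₁,…,p_k)`: the largest integer `m` with `1 ≤ m ≤ C(n,k+1)/s_k(G)` such that
`N(n, m·s₁(G), …, m·s_k(G); H) ≤ Ψ_{H,n}` for every (non-empty) subcomplex `H` of `G`. -/
noncomputable def Mstar (n k : ℕ) (p : ℕ → ℝ) (G : SComplex) : ℕ :=
  sSup {m : ℕ | 1 ≤ m ∧ m * G.s k ≤ n.choose (k + 1) ∧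
    ∀ H : SComplex, H.IsSubcomplex G →
      (Nmax (fun i => if i = 0 then n else m * G.s i) k H : ℝ) ≤ Psi n k p H}

/-- `σ_k`: the complete simplicial complex of dimension `k` on the `k+1` vertices `{1,…,k+1}`. -/
def simplexComplex (k : ℕ) : SComplex where
  faces := (Finset.Icc 1 (k + 1)).powerset.filter fun s => s ≠ ∅
  faces_nonempty := ⟨{1}, by
    simp only [Finset.mem_filter, Finset.mem_powerset, Finset.singleton_subset_iff,
      Finset.mem_Icc]
    exact ⟨⟨le_refl 1, Nat.le_add_left 1 k⟩, by simp⟩⟩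
  empty_not_mem := by simp
  down_closed := by
    intro s hs t hts htne
    simp only [Finset.mem_filter, Finset.mem_powerset] at hs ⊢
    exact ⟨hts.trans hs.1, htne⟩

/-- The `q`-skeleton of a simplicial complex: all simplices of dimension at most `q`. -/
def skeleton (F : SComplex) (q : ℕ) : SComplex where
  faces := F.faces.filter fun s => s.card ≤ q + 1
  faces_nonempty := by
    obtain ⟨t, ht⟩ := F.faces_nonempty
    have htne : t ≠ ∅ := fun h => F.empty_not_mem (h ▸ ht)
    obtain ⟨v, hv⟩ := Finset.nonempty_iff_ne_empty.2 htne
    refine ⟨{v}, ?_⟩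
    simp only [Finset.mem_filter]
    exact ⟨F.down_closed t ht {v} (Finset.singleton_subset_iff.2 hv) (by simp),
      by simp⟩
  empty_not_mem := fun h => F.empty_not_mem (Finset.mem_filter.1 h).1
  down_closed := by
    intro t ht u hut hune
    rw [Finset.mem_filter] at ht ⊢
    exact ⟨F.down_closed t ht.1 u hut hune, le_trans (Finset.card_le_card hut) ht.2⟩

/-- The simplicial boundary matrix `∂_j : C_j → C_{j-1}` over `ℚ`, with the usual signs
determined by the ordering of the vertices. -/
noncomputable def boundaryMatrix (K : SComplex) (j : ℕ) :
    Matrix ↥(K.simplices (j - 1)) ↥(K.simplices j) ℚ :=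
  fun τ σ =>
    if τ.1 ⊆ σ.1 then
      (-1 : ℚ) ^ ((@Finset.filter ℕ (fun w : ℕ => (w : WithBot ℕ) < (σ.1 \ τ.1).min)
        (fun w => WithBot.decidableLT _ _) σ.1).card)
    else 0

/-- The `j`-th Betti number of `K` (over `ℚ`):
`β_j = dim ker ∂_j - rank ∂_{j+1} = s_j(K) - rank ∂_j - rank ∂_{j+1}`. -/
noncomputable def betti (K : SComplex) (j : ℕ) : ℕ :=
  K.s j - (K.boundaryMatrix j).rank - (K.boundaryMatrix (j + 1)).rank

/-- The number of free `j`-simplices of `K`: `j`-simplices not contained in any strictly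
larger simplex of `K`. -/
def freeCount (K : SComplex) (j : ℕ) : ℕ :=
  ((K.simplices j).filter fun t => ∀ u ∈ K.faces, t ⊆ u → u = t).card

end SComplex

open SComplex

section Aux

lemma mem_verts_iff (G : SComplex) {v : ℕ} : v ∈ G.verts ↔ ∃ t ∈ G.faces, v ∈ t := by
  simp [SComplex.verts, Finset.mem_sup]

lemma verts_nonempty (G : SComplex) : G.verts.Nonempty := by
  obtain ⟨t, ht⟩ := G.faces_nonempty
  have htne : t.Nonempty := Finset.nonempty_iff_ne_empty.2 (fun h => G.empty_not_mem (h ▸ ht))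
  obtain ⟨v, hv⟩ := htne
  exact ⟨v, (mem_verts_iff G).2 ⟨t, ht, hv⟩⟩

lemma singleton_mem_faces (G : SComplex) {v : ℕ} (h : v ∈ G.verts) : {v} ∈ G.faces := by
  obtain ⟨t, ht, hvt⟩ := (mem_verts_iff G).1 h
  exact G.down_closed t ht {v} (Finset.singleton_subset_iff.2 hvt) (by simp)

lemma s_zero_eq (G : SComplex) : G.s 0 = G.verts.card := by
  have : G.simplices 0 = G.verts.image (fun v => ({v} : Finset ℕ)) := by
    ext s
    simp only [SComplex.simplices, Finset.mem_filter, Finset.mem_image]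
    constructor
    · rintro ⟨hs, hcard⟩
      obtain ⟨v, rfl⟩ := Finset.card_eq_one.1 hcard
      exact ⟨v, (mem_verts_iff G).2 ⟨{v}, hs, by simp⟩, rfl⟩
    · rintro ⟨v, hv, rfl⟩
      exact ⟨singleton_mem_faces G hv, by simp⟩
  rw [SComplex.s, this, Finset.card_image_of_injective _ (fun a b h => by
    simpa using h)]

lemma copy_maps_verts {F G : SComplex} {φ : ℕ → ℕ} (h : IsOrderedCopy F G φ) {v : ℕ}
    (hv : v ∈ G.verts) : φ v ∈ F.verts := by
  have h1 : ({v} : Finset ℕ).image φ ∈ F.faces := h.2.2 _ (singleton_mem_faces G hv)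
  simp only [Finset.image_singleton] at h1
  exact (mem_verts_iff F).2 ⟨{φ v}, h1, by simp⟩

lemma copies_finite (F G : SComplex) : {φ : ℕ → ℕ | IsOrderedCopy F G φ}.Finite := by
  classical
  obtain ⟨w₀, hw₀⟩ := verts_nonempty F
  set ρ : (ℕ → ℕ) → (↥G.verts → ↥F.verts) := fun φ v =>
    if h : φ v.1 ∈ F.verts then ⟨φ v.1, h⟩ else ⟨w₀, hw₀⟩ with hρ
  apply Set.Finite.of_finite_image (f := ρ) (Set.toFinite _)
  intro φ hφ ψ hψ hfg
  funext u
  by_cases hu : u ∈ G.verts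
  · have h1 := congrFun hfg ⟨u, hu⟩
    simp only [hρ, dif_pos (copy_maps_verts hφ hu), dif_pos (copy_maps_verts hψ hu)] at h1
    exact congrArg Subtype.val h1
  · rw [hφ.2.1 u hu, hψ.2.1 u hu]

end Aux

/-- inequality `e:W.not.small`: for simplicial complexes `F` and `G` there
is a partition `F₀ = ⋃_{v ∈ G₀} V_v` of the vertex set of `F`, indexed by the vertices of `G`,
such that the number of ordered copies `φ` of `G` in `F` with `φ(v) ∈ V_v` for every vertex
`v` of `G` is at least `s₀(G)^{-s₀(G)} · n_o(F,G)`. -/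
theorem stmt_2 (F G : SComplex) :
    ∃ V : ℕ → Finset ℕ,
      (∀ v ∈ G.verts, V v ⊆ F.verts) ∧
      (↑G.verts : Set ℕ).PairwiseDisjoint V ∧
      F.verts = G.verts.biUnion V ∧
      (G.s 0 : ℝ) ^ (-(G.s 0 : ℤ)) * (nOrdered F G : ℝ) ≤
        (Set.ncard {φ : ℕ → ℕ | IsOrderedCopy F G φ ∧ ∀ v ∈ G.verts, φ v ∈ V v} : ℝ) := by
  classical
  set n := G.verts.card with hn
  have hn1 : 1 ≤ n := Finset.card_pos.2 (verts_nonempty G)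
  set N := F.verts.card with hN
  have hSfin : {φ : ℕ → ℕ | IsOrderedCopy F G φ}.Finite := copies_finite F G
  set Sfin : Finset (ℕ → ℕ) := hSfin.toFinset with hSf
  obtain ⟨g₀, hg₀⟩ := verts_nonempty G
  -- colorings
  set V : (↥F.verts → ↥G.verts) → ℕ → Finset ℕ := fun f v =>
    F.verts.filter (fun u => ∀ h : u ∈ F.verts, (f ⟨u, h⟩ : ℕ) = v) with hV
  set compat : (↥F.verts → ↥G.verts) → (ℕ → ℕ) → Prop :=
    fun f φ => ∀ v ∈ G.verts, φ v ∈ V f v with hcompat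
  -- step a: for each ordered copy φ, n^N ≤ #{f compatible with φ} * n^n
  have cardC : Fintype.card (↥F.verts → ↥G.verts) = n ^ N := by
    rw [Fintype.card_fun, Fintype.card_coe, Fintype.card_coe]
  have cardD : Fintype.card (↥G.verts → ↥G.verts) = n ^ n := by
    rw [Fintype.card_fun, Fintype.card_coe]
  have step_a : ∀ φ ∈ Sfin,
      n ^ N ≤ ((Finset.univ.filter (fun f => compat f φ)).card) * n ^ n := by
    intro φ hφmem
    have hφ : IsOrderedCopy F G φ := by
      rw [hSf, Set.Finite.mem_toFinset] at hφmem; exact hφmem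
    set fix : (↥F.verts → ↥G.verts) → (↥F.verts → ↥G.verts) := fun f u =>
      if h : ∃ v, v ∈ G.verts ∧ φ v = u.1 then ⟨h.choose, h.choose_spec.1⟩ else f u with hfix
    set Θ : (↥F.verts → ↥G.verts) → (↥F.verts → ↥G.verts) × (↥G.verts → ↥G.verts) :=
      fun f => (fix f, fun v => f ⟨φ v.1, copy_maps_verts hφ v.2⟩) with hΘ
    have hcompatfix : ∀ f, compat (fix f) φ := by
      intro f v hv
      have hmem : φ v ∈ F.verts := copy_maps_verts hφ hv
      rw [hV]
      simp only [Finset.mem_filter]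
      refine ⟨hmem, fun h' => ?_⟩
      have hex : ∃ w, w ∈ G.verts ∧ φ w = (⟨φ v, h'⟩ : ↥F.verts).1 := ⟨v, hv, rfl⟩
      rw [hfix]
      simp only [dif_pos hex]
      exact hφ.1 hex.choose_spec.1 hv hex.choose_spec.2
    have hinj : Set.InjOn Θ ↑(Finset.univ : Finset (↥F.verts → ↥G.verts)) := by
      intro f₁ _ f₂ _ heq
      rw [hΘ] at heq
      have h1 : fix f₁ = fix f₂ := congrArg Prod.fst heq
      have h2 : (fun v : ↥G.verts => f₁ ⟨φ v.1, copy_maps_verts hφ v.2⟩) =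
          (fun v : ↥G.verts => f₂ ⟨φ v.1, copy_maps_verts hφ v.2⟩) := congrArg Prod.snd heq
      funext u
      by_cases h : ∃ v, v ∈ G.verts ∧ φ v = u.1
      · obtain ⟨v, hv, hφv⟩ := h
        have hu : u = ⟨φ v, copy_maps_verts hφ hv⟩ := Subtype.ext hφv.symm
        rw [hu]
        exact congrFun h2 ⟨v, hv⟩
      · have e1 := congrFun h1 u
        rw [hfix] at e1
        simpa only [dif_neg h] using e1
    calc n ^ N = Fintype.card (↥F.verts → ↥G.verts) := cardC.symm
      _ = (Finset.univ : Finset (↥F.verts → ↥G.verts)).card := (Finset.card_univ).symm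
      _ ≤ ((Finset.univ.filter (fun f => compat f φ)) ×ˢ
            (Finset.univ : Finset (↥G.verts → ↥G.verts))).card := by
          apply Finset.card_le_card_of_injOn Θ _ hinj
          intro f _
          rw [Finset.mem_coe, Finset.mem_product]
          exact ⟨Finset.mem_filter.2 ⟨Finset.mem_univ _, hcompatfix f⟩, Finset.mem_univ _⟩
      _ = ((Finset.univ.filter (fun f => compat f φ)).card) * n ^ n := by
          rw [Finset.card_product, Finset.card_univ, cardD]
  -- step b+c: double counting
  set t : (↥F.verts → ↥G.verts) → ℕ := fun f => (Sfin.filter (compat f)).card with ht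
  have double : Sfin.card * n ^ N ≤
      n ^ n * ∑ f : ↥F.verts → ↥G.verts, t f := by
    have swap : ∑ φ ∈ Sfin, (Finset.univ.filter (fun f => compat f φ)).card =
        ∑ f : ↥F.verts → ↥G.verts, t f := by
      simp only [ht, Finset.card_filter]
      exact Finset.sum_comm
    calc Sfin.card * n ^ N = ∑ _φ ∈ Sfin, n ^ N := by rw [Finset.sum_const, smul_eq_mul]
      _ ≤ ∑ φ ∈ Sfin, (Finset.univ.filter (fun f => compat f φ)).card * n ^ n :=
          Finset.sum_le_sum step_a
      _ = (∑ φ ∈ Sfin, (Finset.univ.filter (fun f => compat f φ)).card) * n ^ n :=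
          (Finset.sum_mul ..).symm
      _ = n ^ n * ∑ f : ↥F.verts → ↥G.verts, t f := by rw [swap, mul_comm]
  -- step d: pigeonhole
  have hCne : (Finset.univ : Finset (↥F.verts → ↥G.verts)).Nonempty :=
    ⟨fun _ => ⟨g₀, hg₀⟩, Finset.mem_univ _⟩
  have hpigeon : ∃ f : ↥F.verts → ↥G.verts, Sfin.card ≤ n ^ n * t f := by
    have hsum : ∑ _f : ↥F.verts → ↥G.verts, Sfin.card ≤
        ∑ f : ↥F.verts → ↥G.verts, n ^ n * t f := by
      rw [Finset.sum_const, smul_eq_mul, Finset.card_univ, cardC, ← Finset.mul_sum]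
      calc n ^ N * Sfin.card = Sfin.card * n ^ N := mul_comm _ _
        _ ≤ n ^ n * ∑ f : ↥F.verts → ↥G.verts, t f := double
    obtain ⟨f, _, hf⟩ := Finset.exists_le_of_sum_le hCne hsum
    exact ⟨f, hf⟩
  obtain ⟨f, hf⟩ := hpigeon
  refine ⟨V f, ?_, ?_, ?_, ?_⟩
  · intro v _
    exact Finset.filter_subset _ _
  · intro v hv w hw hvw
    simp only [Function.onFun]
    rw [Finset.disjoint_left]
    intro u hu hu'
    rw [hV] at hu hu'
    simp only [Finset.mem_filter] at hu hu'
    exact absurd ((hu.2 hu.1).symm.trans (hu'.2 hu.1)) hvw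
  · ext u
    rw [Finset.mem_biUnion]
    constructor
    · intro hu
      refine ⟨(f ⟨u, hu⟩ : ℕ), (f ⟨u, hu⟩).2, ?_⟩
      rw [hV]
      simp only [Finset.mem_filter]
      exact ⟨hu, fun _ => trivial⟩
    · rintro ⟨v, _, hu⟩
      exact Finset.filter_subset _ _ hu
  · -- the numerical inequality
    have hRHS : {φ : ℕ → ℕ | IsOrderedCopy F G φ ∧ ∀ v ∈ G.verts, φ v ∈ V f v} =
        ↑(Sfin.filter (compat f)) := by
      ext φ
      simp only [Set.mem_setOf_eq, Finset.coe_filter, hSf, Set.Finite.mem_toFinset,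
        Set.mem_setOf_eq, hcompat]
    rw [hRHS, Set.ncard_coe_finset]
    have hLHS : nOrdered F G = Sfin.card := Set.ncard_eq_toFinset_card _ hSfin
    have hs0 : G.s 0 = n := s_zero_eq G
    rw [hLHS, hs0]
    have hnpos : (0:ℝ) < (n:ℝ) ^ n := by positivity
    rw [zpow_neg, zpow_natCast, inv_mul_le_iff₀ hnpos]
    calc (Sfin.card : ℝ) ≤ ((n ^ n * t f : ℕ) : ℝ) := by exact_mod_cast hf
      _ = (n:ℝ) ^ n * (Sfin.filter (compat f)).card := by push_cast [ht]; ring
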